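/- arXiv:2001.11213 — 2 statements merged into one kernel-verified Lean document; each statement's English description precedes it below -/
import Mathlib

section
/- For every real number c ≥ 6 and every positive integer N such that N + 1 ≤ c/3, one has (e^{−c}/√c) · Σ_{k=0}^N (2c)^k / k! ≤ (1/√6) · (6/e²)^{c/3}. -/
/-!
Writing `2c = 6 · (c/3)`, each term `(2c)^k / k!` is at most `6^k e^{c/3}`, since `(c/3)^k / k!` is
a single term of the series of `e^{c/3}`. The geometric sum `∑_{k ≤ N} 6^k` is at most
`6^{N+1} ≤ 6^{c/3}`, so the left-hand side is at most `e^{-c} e^{c/3} 6^{c/3} / √6`, which is exactly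
`(6/e²)^{c/3} / √6`.
-/

open Finset

namespace Real

lemma mul_pow_div_factorial_le_exp_mul_pow {a x : ℝ} (ha : 0 ≤ a) (hx : 0 ≤ x) (k : ℕ) :
    (a * x) ^ k / k.factorial ≤ exp x * a ^ k := by
  rw [mul_pow, mul_div_assoc, mul_comm (exp x)]
  exact mul_le_mul_of_nonneg_left (pow_div_factorial_le_exp x hx k) (pow_nonneg ha k)

lemma sum_range_mul_pow_div_factorial_le {a x : ℝ} (ha : 0 ≤ a) (hx : 0 ≤ x) (n : ℕ) :
    ∑ k ∈ range n, (a * x) ^ k / k.factorial ≤ exp x * ∑ k ∈ range n, a ^ k := by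
  rw [mul_sum]
  exact sum_le_sum fun k _ => mul_pow_div_factorial_le_exp_mul_pow ha hx k

lemma rpow_div_exp_one_sq {a : ℝ} (ha : 0 ≤ a) (x : ℝ) :
    (a / exp 1 ^ 2) ^ x = exp (-(2 * x)) * a ^ x := by
  rw [div_rpow ha (by positivity), exp_one_pow, ← exp_mul, exp_neg, div_eq_inv_mul]
  norm_num

end Real

lemma geom_sum_le_pow {a : ℝ} (ha : 2 ≤ a) (n : ℕ) : ∑ k ∈ range n, a ^ k ≤ a ^ n := by
  induction n with
  | zero => simp
  | succ n ih =>
    rw [sum_range_succ, pow_succ]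
    nlinarith [pow_nonneg (by linarith : (0 : ℝ) ≤ a) n]

theorem sum_exp_bound_general (c : ℝ) (hc : 6 ≤ c) (N : ℕ)
    (hNc : (N : ℝ) + 1 ≤ c / 3) :
    (Real.exp (-c) / Real.sqrt c) *
        ∑ k ∈ Finset.range (N + 1), (2 * c) ^ k / (Nat.factorial k : ℝ) ≤
      (1 / Real.sqrt 6) * (6 / Real.exp 1 ^ 2) ^ (c / 3) := by
  have hsum : ∑ k ∈ range (N + 1), (2 * c) ^ k / (k.factorial : ℝ)
      ≤ Real.exp (c / 3) * 6 ^ (c / 3) := by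
    calc ∑ k ∈ range (N + 1), (2 * c) ^ k / (k.factorial : ℝ)
        = ∑ k ∈ range (N + 1), (6 * (c / 3)) ^ k / (k.factorial : ℝ) := by ring_nf
      _ ≤ Real.exp (c / 3) * ∑ k ∈ range (N + 1), (6 : ℝ) ^ k :=
          Real.sum_range_mul_pow_div_factorial_le (by norm_num) (by linarith) _
      _ ≤ Real.exp (c / 3) * (6 : ℝ) ^ ((N + 1 : ℕ) : ℝ) := by
          rw [Real.rpow_natCast]
          gcongr
          exact geom_sum_le_pow (by norm_num) _
      _ ≤ Real.exp (c / 3) * 6 ^ (c / 3) := by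
          gcongr
          · norm_num
          exact_mod_cast hNc
  calc (Real.exp (-c) / Real.sqrt c) *
        ∑ k ∈ range (N + 1), (2 * c) ^ k / (k.factorial : ℝ)
      = (1 / Real.sqrt c) *
          (Real.exp (-c) * ∑ k ∈ range (N + 1), (2 * c) ^ k / (k.factorial : ℝ)) := by
        ring
    _ ≤ (1 / Real.sqrt 6) * (Real.exp (-c) * (Real.exp (c / 3) * 6 ^ (c / 3))) := by
        gcongr
    _ = (1 / Real.sqrt 6) * (6 / Real.exp 1 ^ 2) ^ (c / 3) := by
        rw [Real.rpow_div_exp_one_sq (by norm_num), ← mul_assoc (Real.exp _), ← Real.exp_add]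
        ring_nf

/-- For every real `c ≥ 6` and every positive integer `N` with
`N + 1 ≤ c/3`, one has `(e^{-c}/√c) · ∑_{k=0}^N (2c)^k/k! ≤ (1/√6) · (6/e²)^{c/3}`. -/
theorem sum_exp_bound (c : ℝ) (hc : 6 ≤ c) (N : ℕ) (hN : 0 < N)
    (hNc : (N : ℝ) + 1 ≤ c / 3) :
    (Real.exp (-c) / Real.sqrt c) *
        ∑ k ∈ Finset.range (N + 1), (2 * c) ^ k / (Nat.factorial k : ℝ) ≤
      (1 / Real.sqrt 6) * (6 / Real.exp 1 ^ 2) ^ (c / 3) :=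
  sum_exp_bound_general c hc N hNc
end

section
/- Let c ≥ 6 and s > 0, and assume the eigen-decomposition hypotheses on the Sinc kernel operator Q_c hold. Then every f ∈ L²(I) with ‖f‖_{H̃^s} < ∞ satisfies ‖f − Q_c f‖_{L²(I)} ≤ (7/√6) (6/e²)^{⌊c/3⌋} ‖f‖ + ⌊c/3⌋^{−s} ‖f‖_{H̃^s}. -/
open MeasureTheory

noncomputable section

/-- The `L²([-1,1])` inner product. -/
def ipI (f g : ℝ → ℝ) : ℝ := ∫ x in Set.Icc (-1 : ℝ) 1, f x * g x

/-- The `L²([-1,1])` norm. -/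
def normI (f : ℝ → ℝ) : ℝ := Real.sqrt (ipI f f)

/-- The Sinc kernel on `I = [-1,1]`, with value `c/π` on the diagonal. -/
def sincK (c x y : ℝ) : ℝ :=
  if x = y then c / Real.pi else Real.sin (c * (x - y)) / (Real.pi * (x - y))

/-- The Sinc kernel integral operator `Q_c` on `L²(I)`. -/
def Qc (c : ℝ) (g : ℝ → ℝ) (x : ℝ) : ℝ := ∫ y in Set.Icc (-1 : ℝ) 1, sincK c x y * g y

/-- The weighted Sobolev norm `‖g‖_{H̃^s}` associated with the eigenfunctions `ψ`. -/
def tildeNorm (ψ : ℕ → ℝ → ℝ) (s : ℝ) (g : ℝ → ℝ) : ℝ :=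
  Real.sqrt (∑' k : ℕ, (1 + (k : ℝ) ^ 2) ^ s * (ipI g (ψ k)) ^ 2)

/-!
In the eigenbasis, the symmetry of the Sinc kernel gives `⟨Q_c f, ψ_n⟩ = λ_n ⟨f, ψ_n⟩`, so by
Parseval `‖f - Q_c f‖² = ∑ (1 - λ_n)² ⟨f, ψ_n⟩²`. Split the modes at `N = ⌊c/3⌋`. For `n ≤ N` the
eigenvalue bound, monotone in `n` up to `2c`, gives `1 - λ_n ≤ (7/√c) e^{-c} (2c)^N / N!`, and
`N! ≥ N^N e^{-N}` turns this into `(7/√6)(6/e²)^N`. For `n > N` one uses `1 - λ_n ≤ 1 ≤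
N^{-2s} (1 + n²)^s`. Adding the two estimates termwise and taking square roots gives the bound.
-/

local notation "μI" => volume.restrict (Set.Icc (-1 : ℝ) 1)

open Real
open scoped Nat

lemma sincK_comm (c x y : ℝ) : sincK c x y = sincK c y x := by
  unfold sincK
  rcases eq_or_ne x y with rfl | hxy
  · rfl
  · rw [if_neg hxy, if_neg hxy.symm, ← neg_sub y x, mul_neg, sin_neg, mul_neg, neg_div_neg_eq]

lemma abs_sincK_le {c : ℝ} (hc : 0 ≤ c) (x y : ℝ) : |sincK c x y| ≤ c / π := by
  unfold sincK
  split_ifs with hxy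
  · rw [abs_of_nonneg (by positivity)]
  · have hpos : 0 < π * |x - y| := by have := sub_ne_zero.mpr hxy; positivity
    rw [abs_div, abs_mul, abs_of_pos pi_pos, div_le_div_iff₀ hpos pi_pos]
    calc |sin (c * (x - y))| * π ≤ |c * (x - y)| * π :=
          mul_le_mul_of_nonneg_right abs_sin_le_abs pi_pos.le
      _ = c * (π * |x - y|) := by rw [abs_mul, abs_of_nonneg hc]; ring

lemma measurable_sincK (c : ℝ) : Measurable (Function.uncurry (sincK c)) := by
  unfold Function.uncurry sincK
  refine Measurable.ite (measurableSet_eq_fun measurable_fst measurable_snd) measurable_const ?_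
  fun_prop

lemma ipI_sub_left {f g p : ℝ → ℝ} (hf : MemLp f 2 μI) (hg : MemLp g 2 μI) (hp : MemLp p 2 μI) :
    ipI (fun x => f x - g x) p = ipI f p - ipI g p := by
  simp only [ipI, sub_mul]
  exact integral_sub (hf.integrable_mul hp) (hg.integrable_mul hp)

lemma memLp_two_of_ipI_self_ne_zero {g : ℝ → ℝ} (hg : AEStronglyMeasurable g μI)
    (h : ipI g g ≠ 0) : MemLp g 2 μI := by
  rw [memLp_two_iff_integrable_sq hg]
  simp only [sq]
  exact not_imp_comm.mp integral_undef h

lemma memLp_Qc {c : ℝ} (hc : 0 ≤ c) {f : ℝ → ℝ} (hf : Measurable f) (hfi : Integrable f μI)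
    (p : ENNReal) : MemLp (Qc c f) p μI := by
  have hmeas : StronglyMeasurable (Qc c f) :=
    ((measurable_sincK c).mul (hf.comp measurable_snd)).stronglyMeasurable.integral_prod_right'
  refine MemLp.of_bound hmeas.aestronglyMeasurable (c / π * ∫ y in Set.Icc (-1 : ℝ) 1, |f y|)
    (.of_forall fun x => ?_)
  rw [← integral_const_mul]
  refine (norm_integral_le_integral_norm _).trans (integral_mono_of_nonneg
    (.of_forall fun y => norm_nonneg _) (hfi.abs.const_mul _) (.of_forall fun y => ?_))
  simp only [norm_mul, Real.norm_eq_abs]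
  exact mul_le_mul_of_nonneg_right (abs_sincK_le hc x y) (abs_nonneg _)

lemma ipI_Qc_comm {c : ℝ} (hc : 0 ≤ c) {f p : ℝ → ℝ} (hf : Measurable f) (hfi : Integrable f μI)
    (hp : Measurable p) (hpi : Integrable p μI) : ipI (Qc c f) p = ipI f (Qc c p) := by
  have hint : Integrable (Function.uncurry fun x y => sincK c x y * f y * p x) ((μI).prod μI) := by
    refine Integrable.mono' ((hpi.abs.const_mul (c / π)).mul_prod hfi.abs)
      (((measurable_sincK c).mul (hf.comp measurable_snd)).mul
        (hp.comp measurable_fst)).aestronglyMeasurable (.of_forall fun z => ?_)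
    simp only [Function.uncurry, norm_mul, Real.norm_eq_abs]
    rw [mul_right_comm (c / π)]
    gcongr
    exact abs_sincK_le hc _ _
  calc ipI (Qc c f) p = ∫ x in Set.Icc (-1 : ℝ) 1, ∫ y in Set.Icc (-1 : ℝ) 1,
        sincK c x y * f y * p x := by
        simp only [ipI, Qc, ← integral_mul_const]
    _ = ∫ y in Set.Icc (-1 : ℝ) 1, ∫ x in Set.Icc (-1 : ℝ) 1, sincK c x y * f y * p x :=
        integral_integral_swap hint
    _ = ipI f (Qc c p) := by
        simp only [ipI, Qc, ← integral_const_mul, sincK_comm c _ (_ : ℝ)]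
        congr 1; funext y; congr 1; funext x
        ring

lemma ipI_Qc_of_eigen {c l : ℝ} (hc : 0 ≤ c) {f p : ℝ → ℝ} (hf : Measurable f)
    (hfi : Integrable f μI) (hp : Measurable p) (hpi : Integrable p μI)
    (heig : ∀ x ∈ Set.Icc (-1 : ℝ) 1, Qc c p x = l * p x) :
    ipI (Qc c f) p = l * ipI f p := by
  rw [ipI_Qc_comm hc hf hfi hp hpi, ipI, ipI, ← integral_const_mul]
  refine setIntegral_congr_fun measurableSet_Icc fun x hx => ?_
  simp only [heig x hx]
  ring

lemma pow_div_factorial_le_pow_div_factorial {x : ℝ} {n N : ℕ} (hnN : n ≤ N) (hN : (N : ℝ) ≤ x) :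
    x ^ n / n ! ≤ x ^ N / N ! := by
  induction N, hnN using Nat.le_induction with
  | base => rfl
  | succ m _ ih =>
    have hm : (m : ℝ) + 1 ≤ x := by exact_mod_cast hN
    have hx : 0 ≤ x := by linarith [m.cast_nonneg (α := ℝ)]
    calc x ^ n / n ! ≤ x ^ m / m ! := ih (by linarith)
      _ ≤ x ^ m / m ! * (x / (m + 1)) := le_mul_of_one_le_right (by positivity)
          ((one_le_div (by positivity)).mpr hm)
      _ = x ^ (m + 1) / (m + 1)! := by push_cast [Nat.factorial_succ]; field_simp; ring

lemma exp_neg_mul_pow_div_factorial_le {c : ℝ} {N : ℕ} (hN : 0 < N) (hc : 3 * N ≤ c) :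
    exp (-c) * (2 * c) ^ N / N ! ≤ (6 / exp 1 ^ 2) ^ N := by
  have hN' : (0 : ℝ) < N := by exact_mod_cast hN
  obtain ⟨t, rfl⟩ : ∃ t, c = 3 * N * t := ⟨c / (3 * N), by field_simp⟩
  have ht : 1 ≤ t := le_of_mul_le_mul_left (by linarith) (by positivity : (0 : ℝ) < 3 * N)
  -- equivalently `t ≤ exp (3 (t - 1))`, which follows from `t ≤ 1 + 3 (t - 1)`
  have hkey : t * exp (1 - 3 * t) ≤ exp (-2) := by
    rw [← le_div_iff₀ (exp_pos _), ← exp_sub]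
    linarith [add_one_le_exp (-2 - (1 - 3 * t))]
  calc exp (-(3 * N * t)) * (2 * (3 * N * t)) ^ N / N !
      = exp (-(3 * N * t)) * (2 * (3 * N * t)) ^ N / N ^ N * (N ^ N / N !) := by
        field_simp
    _ ≤ exp (-(3 * N * t)) * (2 * (3 * N * t)) ^ N / N ^ N * exp 1 ^ N := by
        rw [exp_one_pow]
        gcongr
        exact pow_div_factorial_le_exp _ hN'.le N
    _ = (6 * (t * exp (1 - 3 * t))) ^ N := by
        have hpow : exp (-(3 * N * t)) = exp (-3 * t) ^ N := by rw [← exp_nat_mul]; ring_nf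
        have hexp_sub : exp (1 - 3 * t) = exp 1 * exp (-3 * t) := by rw [← exp_add]; ring_nf
        rw [hpow, hexp_sub]
        field_simp
        ring
    _ ≤ (6 / exp 1 ^ 2) ^ N := by
        have hsix : 6 / exp 1 ^ 2 = 6 * exp (-2) := by
          rw [exp_neg, exp_one_pow, div_eq_mul_inv, Nat.cast_ofNat]
        rw [hsix]
        gcongr

lemma sinc_gap_bound_le {c : ℝ} (hc : 6 ≤ c) {n : ℕ} (hn : n ≤ ⌊c / 3⌋₊) :
    7 / √c * exp (-c) * (2 * c) ^ n / n ! ≤ 7 / √6 * (6 / exp 1 ^ 2) ^ ⌊c / 3⌋₊ := by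
  set N := ⌊c / 3⌋₊
  have hN : 0 < N := Nat.floor_pos.mpr (by linarith)
  have h3N : 3 * (N : ℝ) ≤ c := by linarith [Nat.floor_le (by linarith : 0 ≤ c / 3)]
  calc 7 / √c * exp (-c) * (2 * c) ^ n / n ! = 7 / √c * (exp (-c) * ((2 * c) ^ n / n !)) := by
        ring
    _ ≤ 7 / √6 * (exp (-c) * ((2 * c) ^ N / N !)) := by
        refine mul_le_mul (by gcongr) (mul_le_mul_of_nonneg_left
          (pow_div_factorial_le_pow_div_factorial hn (by linarith)) (exp_pos _).le)
          (by positivity) (by positivity)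
    _ ≤ 7 / √6 * (6 / exp 1 ^ 2) ^ N := by
        rw [← mul_div_assoc]
        gcongr
        exact exp_neg_mul_pow_div_factorial_le hN h3N

lemma one_le_rpow_neg_sq_mul_rpow {N k s : ℝ} (hN : 0 < N) (hNk : N ≤ k) (hs : 0 ≤ s) :
    1 ≤ (N ^ (-s)) ^ 2 * (1 + k ^ 2) ^ s := by
  rw [rpow_neg hN.le, inv_pow, inv_mul_eq_div, one_le_div (by positivity),
    rpow_pow_comm hN.le]
  exact rpow_le_rpow (by positivity) (by nlinarith) hs

lemma sqrt_add_le_sqrt_add_sqrt (x y : ℝ) : √(x + y) ≤ √x + √y := by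
  rw [sqrt_le_iff]
  refine ⟨by positivity, ?_⟩
  have hx : x ≤ √x ^ 2 := sq_sqrt' ▸ le_max_left x 0
  have hy : y ≤ √y ^ 2 := sq_sqrt' ▸ le_max_left y 0
  nlinarith [sqrt_nonneg x, sqrt_nonneg y]

lemma sqrt_tsum_mul_sq_le {t a w : ℕ → ℝ} {ε δ : ℝ} (hε : 0 ≤ ε) (hδ : 0 ≤ δ)
    (ht : ∀ n, 0 ≤ t n ∧ t n ≤ 1) (hw0 : ∀ n, 0 ≤ w n) (hsplit : ∀ n, t n ≤ ε ∨ 1 ≤ δ ^ 2 * w n)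
    (ha : Summable fun n => a n ^ 2) (hw : Summable fun n => w n * a n ^ 2) :
    √(∑' n, (t n * a n) ^ 2) ≤ ε * √(∑' n, a n ^ 2) + δ * √(∑' n, w n * a n ^ 2) := by
  have hpt : ∀ n, (t n * a n) ^ 2 ≤ ε ^ 2 * a n ^ 2 + δ ^ 2 * (w n * a n ^ 2) := by
    intro n
    obtain ⟨ht0, ht1⟩ := ht n
    have ha2 := sq_nonneg (a n)
    rw [mul_pow]
    rcases hsplit n with h | h
    · have : t n ^ 2 ≤ ε ^ 2 := pow_le_pow_left₀ ht0 h 2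
      nlinarith [mul_le_mul_of_nonneg_right this ha2, mul_nonneg (sq_nonneg δ) (hw0 n)]
    · have : t n ^ 2 ≤ δ ^ 2 * w n := by nlinarith
      nlinarith [mul_le_mul_of_nonneg_right this ha2, mul_nonneg hε hε]
  have hsum := (ha.mul_left (ε ^ 2)).add (hw.mul_left (δ ^ 2))
  calc √(∑' n, (t n * a n) ^ 2) ≤ √(ε ^ 2 * ∑' n, a n ^ 2 + δ ^ 2 * ∑' n, w n * a n ^ 2) := by
        refine sqrt_le_sqrt ?_
        rw [← tsum_mul_left, ← tsum_mul_left, ← (ha.mul_left _).tsum_add (hw.mul_left _)]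
        exact (hsum.of_nonneg_of_le (fun n => sq_nonneg _) hpt).tsum_le_tsum hpt hsum
    _ ≤ √(ε ^ 2 * ∑' n, a n ^ 2) + √(δ ^ 2 * ∑' n, w n * a n ^ 2) :=
        sqrt_add_le_sqrt_add_sqrt _ _
    _ = ε * √(∑' n, a n ^ 2) + δ * √(∑' n, w n * a n ^ 2) := by
        rw [sqrt_mul (sq_nonneg ε), sqrt_mul (sq_nonneg δ), sqrt_sq hε, sqrt_sq hδ]

/-- Let `c ≥ 6`, `s > 0`, and assume the eigen-decomposition hypotheses
on the Sinc kernel operator `Q_c`: `(ψ_n)` orthonormal basis of `L²(I)`,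
`Q_c ψ_n = λ_n ψ_n` with `λ_n ∈ (0,1)` and `1 − λ_n ≤ (7/√c) e^{−c} (2c)^n/n!` for
`0 ≤ n < c/2.7`. Then every `f ∈ L²(I)` with `‖f‖_{H̃^s} < ∞` satisfies
`‖f − Q_c f‖ ≤ (7/√6)(6/e²)^{⌊c/3⌋} ‖f‖ + ⌊c/3⌋^{−s} ‖f‖_{H̃^s}`. -/
theorem sinc_operator_bias_bound (c s : ℝ) (hc : 6 ≤ c) (hs : 0 < s)
    (ψ : ℕ → ℝ → ℝ) (lam : ℕ → ℝ)
    (hψ_meas : ∀ n, Measurable (ψ n))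
    (hψ_orth : ∀ m n : ℕ, ipI (ψ m) (ψ n) = if m = n then 1 else 0)
    (hψ_complete : ∀ g : ℝ → ℝ, MemLp g 2 (volume.restrict (Set.Icc (-1 : ℝ) 1)) →
      ipI g g = ∑' n : ℕ, (ipI g (ψ n)) ^ 2)
    (hlam : ∀ n, lam n ∈ Set.Ioo (0 : ℝ) 1)
    (heig : ∀ n : ℕ, ∀ x ∈ Set.Icc (-1 : ℝ) 1, Qc c (ψ n) x = lam n * ψ n x)
    (hlam_bound : ∀ n : ℕ, (n : ℝ) < c / 2.7 →
      1 - lam n ≤ (7 / Real.sqrt c) * Real.exp (-c) * (2 * c) ^ n / (Nat.factorial n : ℝ))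
    (f : ℝ → ℝ) (hf_meas : Measurable f)
    (hfL2 : MemLp f 2 (volume.restrict (Set.Icc (-1 : ℝ) 1)))
    (hf_tilde : Summable (fun k : ℕ => (1 + (k : ℝ) ^ 2) ^ s * (ipI f (ψ k)) ^ 2)) :
    normI (fun x => f x - Qc c f x) ≤
      (7 / Real.sqrt 6) * (6 / Real.exp 1 ^ 2) ^ (Nat.floor (c / 3)) * normI f +
        (Nat.floor (c / 3) : ℝ) ^ (-s) * tildeNorm ψ s f := by
  set N := ⌊c / 3⌋₊
  have hc0 : 0 ≤ c := by linarith
  have hψL2 (n : ℕ) : MemLp (ψ n) 2 μI :=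
    memLp_two_of_ipI_self_ne_zero (hψ_meas n).aestronglyMeasurable (by simp [hψ_orth])
  have hfL1 := hfL2.integrable one_le_two
  have hQfL2 : MemLp (Qc c f) 2 μI := memLp_Qc hc0 hf_meas hfL1 2
  have hcoeff (n : ℕ) :
      ipI (fun x => f x - Qc c f x) (ψ n) = (1 - lam n) * ipI f (ψ n) := by
    rw [ipI_sub_left hfL2 hQfL2 (hψL2 n), ipI_Qc_of_eigen hc0 hf_meas hfL1 (hψ_meas n)
      ((hψL2 n).integrable one_le_two) (heig n)]
    ring
  have hsplit (n : ℕ) : 1 - lam n ≤ 7 / √6 * (6 / exp 1 ^ 2) ^ N ∨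
      1 ≤ ((N : ℝ) ^ (-s)) ^ 2 * (1 + (n : ℝ) ^ 2) ^ s := by
    rcases le_or_gt n N with hn | hn
    · have hnc : (n : ℝ) ≤ c / 3 := (Nat.cast_le.mpr hn).trans (Nat.floor_le (by positivity))
      have hn_lt : (n : ℝ) < c / 2.7 := by rw [lt_div_iff₀ (by norm_num)]; linarith
      exact .inl ((hlam_bound n hn_lt).trans (sinc_gap_bound_le hc hn))
    · have hN : (0 : ℝ) < N := Nat.cast_pos.mpr (Nat.floor_pos.mpr (by linarith))
      exact .inr (one_le_rpow_neg_sq_mul_rpow hN (Nat.cast_le.mpr hn.le) hs.le)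
  have hcoeff_sq : Summable fun n => ipI f (ψ n) ^ 2 :=
    hf_tilde.of_nonneg_of_le (fun _ => sq_nonneg _) fun n => le_mul_of_one_le_left (sq_nonneg _)
      (one_le_rpow (le_add_of_nonneg_right (by positivity)) hs.le)
  unfold normI tildeNorm
  rw [hψ_complete (fun x => f x - Qc c f x) (hfL2.sub hQfL2), hψ_complete f hfL2]
  simp only [hcoeff]
  exact sqrt_tsum_mul_sq_le (by positivity) (by positivity)
    (fun n => ⟨by linarith [(hlam n).2], by linarith [(hlam n).1]⟩) (fun n => by positivity)
    hsplit hcoeff_sq hf_tilde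

end
end
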